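/- arXiv:1707.03252 — 7 statements merged into one kernel-verified Lean document; each statement's English description precedes it below -/
import Mathlib

section
/- If a K_{2,3}-free graph G has at least two anticomponents each containing at least two vertices, then the independence number of G is exactly 2. -/
/-!
Two vertices in different anticomponents are adjacent, so a stable set lies inside a single
anticomponent, while every nontrivial anticomponent contains a non-edge, i.e. a stable pair. If
there were a stable triple, a non-edge of another nontrivial anticomponent would be completely
joined to it, giving an induced `K_{2,3}`.
-/

open SimpleGraph Set

variable {V : Type*}

def IsStableSet (G : SimpleGraph V) (S : Set V) : Prop :=
  S.Pairwise fun a b => ¬ G.Adj a b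

open Finset

namespace SimpleGraph

variable {G : SimpleGraph V}

lemma adj_of_connectedComponentMk_compl_ne {a b : V}
    (h : (Gᶜ).connectedComponentMk a ≠ (Gᶜ).connectedComponentMk b) : G.Adj a b := by
  by_contra hadj
  have hab : a ≠ b := by rintro rfl; exact h rfl
  exact h (ConnectedComponent.sound ((G.compl_adj a b).2 ⟨hab, hadj⟩).reachable)

lemma exists_adj_of_mem_supp_of_ne {u u' : V} (hu' : u' ∈ (G.connectedComponentMk u).supp)
    (hne : u' ≠ u) : ∃ y, G.Adj u y := by
  rw [ConnectedComponent.mem_supp_iff, ConnectedComponent.eq] at hu'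
  obtain ⟨p⟩ := hu'.symm
  cases p with
  | nil => exact absurd rfl hne
  | cons h _ => exact ⟨_, h⟩

end SimpleGraph

section IsStableSet

variable {G : SimpleGraph V}

lemma IsStableSet.not_adj {S : Set V} (hS : IsStableSet G S) {a b : V} (ha : a ∈ S)
    (hb : b ∈ S) : ¬ G.Adj a b := by
  obtain rfl | hab := eq_or_ne a b
  · exact G.irrefl
  · exact hS ha hb hab

lemma IsStableSet.connectedComponentMk_compl_eq {S : Set V} (hS : IsStableSet G S) {a b : V}
    (ha : a ∈ S) (hb : b ∈ S) : (Gᶜ).connectedComponentMk a = (Gᶜ).connectedComponentMk b := by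
  by_contra h
  exact hS.not_adj ha hb (adj_of_connectedComponentMk_compl_ne h)

lemma isStableSet_pair {a b : V} (h : ¬ G.Adj a b) : IsStableSet G {a, b} :=
  Set.pairwise_pair.2 fun _ => ⟨h, fun h' => h h'.symm⟩

lemma IsStableSet.nonempty_completeBipartiteGraph_embedding {A B : Finset V}
    (hA : IsStableSet G A) (hB : IsStableSet G B) (hAB : ∀ a ∈ A, ∀ b ∈ B, G.Adj a b) :
    Nonempty (completeBipartiteGraph (Fin #A) (Fin #B) ↪g G) := by
  let f : Fin #A ↪ V := A.equivFin.symm.toEmbedding.trans (Function.Embedding.subtype _)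
  let g : Fin #B ↪ V := B.equivFin.symm.toEmbedding.trans (Function.Embedding.subtype _)
  have hf (i : Fin #A) : f i ∈ A := (A.equivFin.symm i).2
  have hg (j : Fin #B) : g j ∈ B := (B.equivFin.symm j).2
  refine ⟨⟨⟨Sum.elim f g, f.injective.sumElim g.injective fun i j => (hAB _ (hf i) _ (hg j)).ne⟩,
    ?_⟩⟩
  rintro (i | i) (j | j)
  · simpa using hA.not_adj (hf i) (hf j)
  · simpa using hAB _ (hf i) _ (hg j)
  · simpa using (hAB _ (hf j) _ (hg i)).symm
  · simpa using hB.not_adj (hg i) (hg j)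

end IsStableSet

theorem stmt1 (G : SimpleGraph V)
    (hfree : IsEmpty (completeBipartiteGraph (Fin 2) (Fin 3) ↪g G))
    (u v : V) (huv : (Gᶜ).connectedComponentMk u ≠ (Gᶜ).connectedComponentMk v)
    (hu : ∃ u' ∈ ((Gᶜ).connectedComponentMk u).supp, u' ≠ u)
    (hv : ∃ v' ∈ ((Gᶜ).connectedComponentMk v).supp, v' ≠ v) :
    (∃ S : Finset V, IsStableSet G ↑S ∧ S.card = 2) ∧
      ∀ S : Finset V, IsStableSet G ↑S → S.card ≤ 2 := by
  classical
  obtain ⟨u', hu', hu'u⟩ := hu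
  obtain ⟨v', hv', hv'v⟩ := hv
  obtain ⟨y, hy⟩ := exists_adj_of_mem_supp_of_ne hu' hu'u
  obtain ⟨z, hz⟩ := exists_adj_of_mem_supp_of_ne hv' hv'v
  refine ⟨⟨{u, y}, by rw [coe_pair]; exact isStableSet_pair hy.2, card_pair hy.1⟩, fun S hS => ?_⟩
  by_contra! hcard
  obtain ⟨T, hTS, hT⟩ := exists_subset_card_eq hcard
  have hTstable : IsStableSet G (T : Set V) := hS.mono (coe_subset.2 hTS)
  obtain ⟨a, ha⟩ : T.Nonempty := card_pos.1 (by omega)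
  obtain ⟨w, x, hwx, hwa⟩ : ∃ w x, (Gᶜ).Adj w x ∧
      (Gᶜ).connectedComponentMk w ≠ (Gᶜ).connectedComponentMk a := by
    by_cases h : (Gᶜ).connectedComponentMk u = (Gᶜ).connectedComponentMk a
    · exact ⟨v, z, hz, fun h' => huv (h.trans h'.symm)⟩
    · exact ⟨u, y, hy, h⟩
  have hjoin : ∀ p ∈ ({w, x} : Finset V), ∀ q ∈ T, G.Adj p q := by
    intro p hp q hq
    apply adj_of_connectedComponentMk_compl_ne
    have hpw : (Gᶜ).connectedComponentMk p = (Gᶜ).connectedComponentMk w := by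
      rcases mem_insert.1 hp with rfl | hp
      · rfl
      · rw [mem_singleton.1 hp]; exact ConnectedComponent.sound hwx.reachable.symm
    rwa [hpw, hTstable.connectedComponentMk_compl_eq (mem_coe.2 hq) (mem_coe.2 ha)]
  have hpair : IsStableSet G (({w, x} : Finset V) : Set V) := by
    rw [coe_pair]; exact isStableSet_pair hwx.2
  have hK := hpair.nonempty_completeBipartiteGraph_embedding hTstable hjoin
  rw [card_pair hwx.1, hT] at hK
  exact hfree.false hK.some
end

section
/- Let G be a house-free graph with independence number at most 2 that admits a clique-cutset. Then G is chordal. -/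
open SimpleGraph Set

variable {V : Type*}

def CutPartition (G : SimpleGraph V) (A B C : Set V) : Prop :=
  A.Nonempty ∧ B.Nonempty ∧ Disjoint A B ∧ Disjoint A C ∧ Disjoint B C ∧
    A ∪ B ∪ C = Set.univ ∧ ∀ a ∈ A, ∀ b ∈ B, ¬ G.Adj a b

def CliqueCutPartition (G : SimpleGraph V) (A B C : Set V) : Prop :=
  CutPartition G A B C ∧ G.IsClique C

def HasCliqueCutset (G : SimpleGraph V) : Prop := ∃ A B C, CliqueCutPartition G A B C

def IsChordal (G : SimpleGraph V) : Prop := ∀ n, 4 ≤ n → IsEmpty (cycleGraph n ↪g G)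


/-! If the clique `C` separates `A` from `B`, then `α(G) ≤ 2` forces `A` and `B` to be cliques.
Take a hole `H` of `G`. Two consecutive vertices `u, v` of `H` cannot both lie in `A`: their other
neighbours on `H` are adjacent to `A` but miss a vertex of the clique `A`, so they lie in `C`;
together with `u, v` they span an induced square, and any `b ∈ B` misses `u, v` but, as
`α(G) ≤ 2`, sees the other two, forming a house. Hence a vertex of `H` in `A` would have both its
neighbours on `H` in `C`, which is impossible as they are non-adjacent. So `H` avoids `A`, and
likewise `B`: it lies in the clique `C`, which is absurd. -/

section

variable {G : SimpleGraph V}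

theorem indepSetFree_three_of_isStableSet_card_le_two
    (h : ∀ S : Finset V, IsStableSet G ↑S → S.card ≤ 2) : G.IndepSetFree 3 := fun t ht => by
  have := h t ht.isIndepSet
  rw [ht.card_eq] at this
  omega

theorem adj_of_indepSetFree_three (hα : G.IndepSetFree 3) {a b c : V}
    (hab : a ≠ b) (hac : a ≠ c) (hbc : b ≠ c) (hab' : ¬G.Adj a b) (hac' : ¬G.Adj a c) :
    G.Adj b c := by
  classical
  by_contra hbc'
  exact G.cliqueFree_compl.2 hα {a, b, c}
    (is3Clique_triple_iff.2 ⟨⟨hab, hab'⟩, ⟨hac, hac'⟩, ⟨hbc, hbc'⟩⟩)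

theorem false_of_house (hfree : IsEmpty ((pathGraph 5)ᶜ ↪g G)) {w x y z b : V}
    (hwx : G.Adj w x) (hxy : G.Adj x y) (hyz : G.Adj y z) (hzw : G.Adj z w)
    (hwy : ¬G.Adj w y) (hxz : ¬G.Adj x z) (hby : G.Adj b y) (hbz : G.Adj b z)
    (hbw : ¬G.Adj b w) (hbx : ¬G.Adj b x) : False := by
  -- the non-edges of the house form the path `z x b w y`
  refine hfree.false ⟨⟨![z, x, b, w, y], fun i j hij => ?_⟩, fun {i j} => ?_⟩
  · fin_cases i <;> fin_cases j <;> simp_all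
  · change G.Adj (![z, x, b, w, y] i) (![z, x, b, w, y] j) ↔ _
    fin_cases i <;> fin_cases j <;> simp [compl_adj, pathGraph_adj, *] <;>
      grind [SimpleGraph.adj_comm]

theorem eq_or_eq_of_not_adj_of_induced_square (hfree : IsEmpty ((pathGraph 5)ᶜ ↪g G))
    (hα : G.IndepSetFree 3) {w x y z b : V}
    (hwx : G.Adj w x) (hxy : G.Adj x y) (hyz : G.Adj y z) (hzw : G.Adj z w)
    (hwy : w ≠ y) (hxz : x ≠ z) (hwy' : ¬G.Adj w y) (hxz' : ¬G.Adj x z)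
    (hbw : ¬G.Adj b w) (hbx : ¬G.Adj b x) : b = y ∨ b = z := by
  by_contra! ⟨hby, hbz⟩
  have hwb : w ≠ b := by rintro rfl; exact hbx hwx
  have hxb : x ≠ b := by rintro rfl; exact hbw hwx.symm
  exact false_of_house hfree hwx hxy hyz hzw hwy' hxz'
    (adj_of_indepSetFree_three hα hwb hwy hby (fun h => hbw h.symm) hwy')
    (adj_of_indepSetFree_three hα hxb hxz hbz (fun h => hbx h.symm) hxz') hbw hbx

theorem SimpleGraph.cycleGraph_not_adj_of_sub_eq_two {n : ℕ} {u v : Fin (n + 4)}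
    (h : v - u = 2) : ¬(cycleGraph (n + 4)).Adj u v := by
  rw [cycleGraph_adj, ← neg_sub v u, h]
  simp (disch := omega) [Fin.ext_iff, Nat.mod_eq_of_lt, Fin.val_neg']

theorem Fin.ne_of_sub_eq_two_or_three {n : ℕ} {u v : Fin (n + 4)}
    (h : v - u = 2 ∨ v - u = 3) : u ≠ v := by
  rintro rfl
  simp (disch := omega) [Fin.ext_iff, Nat.mod_eq_of_lt] at h

namespace SimpleGraph.Embedding

variable {n : ℕ}

theorem adj_of_sub_eq_one (f : cycleGraph (n + 2) ↪g G) {i j : Fin (n + 2)} (h : j - i = 1) :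
    G.Adj (f i) (f j) :=
  f.map_adj_iff.2 (cycleGraph_adj.2 (.inr h))

theorem not_adj_of_sub_eq_two (f : cycleGraph (n + 4) ↪g G) {i j : Fin (n + 4)}
    (h : j - i = 2) : ¬G.Adj (f i) (f j) :=
  fun hadj => cycleGraph_not_adj_of_sub_eq_two h (f.map_adj_iff.1 hadj)

theorem ne_of_sub_eq_two_or_three (f : cycleGraph (n + 4) ↪g G) {i j : Fin (n + 4)}
    (h : j - i = 2 ∨ j - i = 3) : f i ≠ f j :=
  f.injective.ne (Fin.ne_of_sub_eq_two_or_three h)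

end SimpleGraph.Embedding

end

namespace CliqueCutPartition

variable {G : SimpleGraph V} {A B C : Set V}

theorem symm (h : CliqueCutPartition G A B C) : CliqueCutPartition G B A C := by
  obtain ⟨⟨hA, hB, hAB, hAC, hBC, hcover, hAB'⟩, hC⟩ := h
  exact ⟨⟨hB, hA, hAB.symm, hBC, hAC, by rwa [union_comm B A],
    fun b hb a ha hba => hAB' a ha b hb hba.symm⟩, hC⟩

theorem mem_of_notMem_of_notMem (h : CliqueCutPartition G A B C) {v : V}
    (hA : v ∉ A) (hB : v ∉ B) : v ∈ C := by
  obtain ⟨⟨-, -, -, -, -, hcover, -⟩, -⟩ := h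
  have hv : v ∈ A ∪ B ∪ C := hcover ▸ mem_univ v
  rcases hv with (hv | hv) | hv
  exacts [absurd hv hA, absurd hv hB, hv]

theorem mem_left_or_mem_of_adj (h : CliqueCutPartition G A B C) {u v : V}
    (hu : u ∈ A) (huv : G.Adj u v) : v ∈ A ∨ v ∈ C := by
  obtain ⟨⟨-, -, -, -, -, hcover, hAB⟩, -⟩ := h
  have hv : v ∈ A ∪ B ∪ C := hcover ▸ mem_univ v
  rcases hv with (hv | hv) | hv
  exacts [.inl hv, absurd huv (hAB u hu v hv), .inr hv]

theorem isClique_left (h : CliqueCutPartition G A B C) (hα : G.IndepSetFree 3) :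
    G.IsClique A := by
  obtain ⟨⟨-, ⟨b, hb⟩, hAB, -, -, -, hAB'⟩, -⟩ := h
  intro a₁ ha₁ a₂ ha₂ hne
  exact adj_of_indepSetFree_three hα (hAB.ne_of_mem ha₁ hb).symm (hAB.ne_of_mem ha₂ hb).symm
    hne (fun hba => hAB' a₁ ha₁ b hb hba.symm) (fun hba => hAB' a₂ ha₂ b hb hba.symm)

theorem mem_of_adj_of_not_adj (h : CliqueCutPartition G A B C) (hα : G.IndepSetFree 3)
    {u u' v : V} (hu : u ∈ A) (hu' : u' ∈ A) (huv : G.Adj u v) (hvu' : v ≠ u')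
    (hvu'' : ¬G.Adj v u') : v ∈ C :=
  (h.mem_left_or_mem_of_adj hu huv).resolve_left fun hv => hvu'' (h.isClique_left hα hv hu' hvu')

theorem false_of_induced_square (h : CliqueCutPartition G A B C)
    (hfree : IsEmpty ((pathGraph 5)ᶜ ↪g G)) (hα : G.IndepSetFree 3)
    {w x y z : V} (hw : w ∈ A) (hx : x ∈ A) (hy : y ∈ C) (hz : z ∈ C)
    (hwx : G.Adj w x) (hxy : G.Adj x y) (hyz : G.Adj y z) (hzw : G.Adj z w)
    (hwy : ¬G.Adj w y) (hxz : ¬G.Adj x z) : False := by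
  obtain ⟨⟨-, ⟨b, hb⟩, -, hAC, hBC, -, hAB⟩, -⟩ := h
  rcases eq_or_eq_of_not_adj_of_induced_square hfree hα hwx hxy hyz hzw (hAC.ne_of_mem hw hy)
      (hAC.ne_of_mem hx hz) hwy hxz (fun hbw => hAB w hw b hb hbw.symm)
      (fun hbx => hAB x hx b hb hbx.symm) with rfl | rfl
  · exact hBC.ne_of_mem hb hy rfl
  · exact hBC.ne_of_mem hb hz rfl

variable {n : ℕ}

theorem false_of_consecutive_mem_left (h : CliqueCutPartition G A B C)
    (hfree : IsEmpty ((pathGraph 5)ᶜ ↪g G)) (hα : G.IndepSetFree 3)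
    (f : cycleGraph (n + 4) ↪g G) {i j : Fin (n + 4)} (hij : j - i = 1)
    (hi : f i ∈ A) (hj : f j ∈ A) : False := by
  have hprev : f (i - 1) ∈ C := h.mem_of_adj_of_not_adj hα hi hj
    (f.adj_of_sub_eq_one (by grind)).symm (f.ne_of_sub_eq_two_or_three (.inl (by grind)))
    (f.not_adj_of_sub_eq_two (by grind))
  have hnext : f (j + 1) ∈ C := h.mem_of_adj_of_not_adj hα hj hi
    (f.adj_of_sub_eq_one (by grind)) (f.ne_of_sub_eq_two_or_three (.inl (by grind))).symm
    (fun hadj => f.not_adj_of_sub_eq_two (by grind) hadj.symm)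
  exact h.false_of_induced_square hfree hα hi hj hnext hprev (f.adj_of_sub_eq_one hij)
    (f.adj_of_sub_eq_one (by grind))
    (h.2 hnext hprev (f.ne_of_sub_eq_two_or_three (.inr (by grind))).symm)
    (f.adj_of_sub_eq_one (by grind)) (f.not_adj_of_sub_eq_two (by grind))
    (fun hadj => f.not_adj_of_sub_eq_two (by grind) hadj.symm)

theorem apply_notMem_left (h : CliqueCutPartition G A B C)
    (hfree : IsEmpty ((pathGraph 5)ᶜ ↪g G)) (hα : G.IndepSetFree 3)
    (f : cycleGraph (n + 4) ↪g G) (i : Fin (n + 4)) : f i ∉ A := by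
  intro hi
  have hnext : f (i + 1) ∈ C :=
    (h.mem_left_or_mem_of_adj hi (f.adj_of_sub_eq_one (by grind))).resolve_left
      (h.false_of_consecutive_mem_left hfree hα f (by grind) hi)
  have hprev : f (i - 1) ∈ C :=
    (h.mem_left_or_mem_of_adj hi (f.adj_of_sub_eq_one (by grind)).symm).resolve_left
      fun hprev => h.false_of_consecutive_mem_left hfree hα f (by grind) hprev hi
  exact f.not_adj_of_sub_eq_two (by grind)
    (h.2 hprev hnext (f.ne_of_sub_eq_two_or_three (.inl (by grind))))

theorem apply_mem (h : CliqueCutPartition G A B C) (hfree : IsEmpty ((pathGraph 5)ᶜ ↪g G))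
    (hα : G.IndepSetFree 3) (f : cycleGraph (n + 4) ↪g G) (i : Fin (n + 4)) : f i ∈ C :=
  h.mem_of_notMem_of_notMem (h.apply_notMem_left hfree hα f i)
    (h.symm.apply_notMem_left hfree hα f i)

end CliqueCutPartition

theorem stmt3 (G : SimpleGraph V)
    (hfree : IsEmpty ((pathGraph 5)ᶜ ↪g G))
    (halpha : ∀ S : Finset V, IsStableSet G ↑S → S.card ≤ 2)
    (hcut : HasCliqueCutset G) :
    IsChordal G := by
  obtain ⟨A, B, C, h⟩ := hcut
  have hα := indepSetFree_three_of_isStableSet_card_le_two halpha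
  intro n hn
  obtain ⟨m, rfl⟩ : ∃ m, n = m + 4 := ⟨n - 4, by omega⟩
  refine ⟨fun f => f.not_adj_of_sub_eq_two (sub_zero 2) ?_⟩
  exact h.2 (h.apply_mem hfree hα f 0) (h.apply_mem hfree hα f 2)
    (f.ne_of_sub_eq_two_or_three (.inl (sub_zero 2)))
end

section
/- Let R be a k-ring with good partition (X_1,…,X_k). Then every hole (induced cycle of length at least 4) in R intersects each of X_1,…,X_k in exactly one vertex; consequently every hole in R has length exactly k. -/
/-! Two vertices of one part `X i` have nested closed neighbourhoods, whereas on a hole of length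
at least four no closed neighbourhood contains another one; so a hole meets each part at most
once. The two hole-neighbours of a vertex in `X i` therefore lie in the distinct parts `X (i - 1)`
and `X (i + 1)`, so the parts met by the hole are closed under `i ↦ i + 1`, i.e. the hole meets
every part. Hence the part index is a bijection from the hole to `ZMod k`, and the hole has length
`k`. -/

open SimpleGraph Set

variable {V : Type*}

/-- closed neighborhood -/
def closedNbhd (G : SimpleGraph V) (v : V) : Set V := insert v (G.neighborSet v)

def IsRingPartition (G : SimpleGraph V) (k : ℕ) (X : ZMod k → Set V) : Prop :=
  4 ≤ k ∧ (∀ i, (X i).Nonempty) ∧ (Pairwise fun i j => Disjoint (X i) (X j)) ∧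
    (⋃ i, X i) = Set.univ ∧
    ∀ i : ZMod k, ∃ (n : ℕ) (u : Fin (n + 1) → V),
      Function.Injective u ∧ Set.range u = X i ∧
      (∀ a b : Fin (n + 1), a ≤ b → closedNbhd G (u b) ⊆ closedNbhd G (u a)) ∧
      X i ⊆ closedNbhd G (u (Fin.last n)) ∧
      closedNbhd G (u 0) = X (i - 1) ∪ X i ∪ X (i + 1)

lemma mem_closedNbhd {G : SimpleGraph V} {x y : V} :
    y ∈ closedNbhd G x ↔ y = x ∨ G.Adj x y := by
  simp [closedNbhd, mem_insert_iff, mem_neighborSet]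

lemma mem_closedNbhd_comm {G : SimpleGraph V} {x y : V} :
    y ∈ closedNbhd G x ↔ x ∈ closedNbhd G y := by
  simp only [mem_closedNbhd, eq_comm, G.adj_comm]

section Hole

open Fin.CommRing

variable {n : ℕ}

lemma cycleGraph_adj_add_one (a : Fin (n + 2)) : (cycleGraph (n + 2)).Adj a (a + 1) := by
  rw [cycleGraph_adj]
  simp

lemma cycleGraph_adj_sub_one (a : Fin (n + 2)) : (cycleGraph (n + 2)).Adj a (a - 1) := by
  rw [cycleGraph_adj]
  simp

lemma Fin.sub_one_ne_add_one (a : Fin (n + 3)) : a - 1 ≠ a + 1 := by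
  have two_ne_zero : (2 : Fin (n + 3)) ≠ 0 := by
    simp [Fin.ext_iff, Nat.mod_eq_of_lt (show 2 < n + 3 by omega)]
  intro h
  exact two_ne_zero (by linear_combination -h)

lemma cycleGraph_not_adj_sub_one_add_one (a : Fin (n + 4)) :
    ¬(cycleGraph (n + 4)).Adj (a - 1) (a + 1) := by
  have three_ne_zero : (3 : Fin (n + 4)) ≠ 0 := by
    simp [Fin.ext_iff, Nat.mod_eq_of_lt (show 3 < n + 4 by omega)]
  rw [cycleGraph_adj]
  rintro (h | h)
  · exact three_ne_zero (by linear_combination -h)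
  · exact one_ne_zero (α := Fin (n + 4)) (by linear_combination h)

variable {G : SimpleGraph V} (f : cycleGraph (n + 4) ↪g G)

lemma hole_notMem_closedNbhd_sub_one (a : Fin (n + 4)) :
    f (a + 1) ∉ closedNbhd G (f (a - 1)) := by
  rw [mem_closedNbhd, f.injective.eq_iff, f.map_adj_iff]
  exact not_or.mpr ⟨(Fin.sub_one_ne_add_one a).symm, cycleGraph_not_adj_sub_one_add_one a⟩

lemma hole_closedNbhd_not_subset {a b : Fin (n + 4)} (hab : a ≠ b) :
    ¬closedNbhd G (f a) ⊆ closedNbhd G (f b) := by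
  intro hsub
  have hadj : G.Adj (f b) (f a) := by
    simpa [mem_closedNbhd, hab] using hsub (mem_closedNbhd.mpr (Or.inl rfl))
  have nbr_mem (c : Fin (n + 4)) (hc : (cycleGraph (n + 4)).Adj a c) :
      f c ∈ closedNbhd G (f b) :=
    hsub (mem_closedNbhd.mpr (Or.inr (f.map_adj_iff.mpr hc)))
  rcases cycleGraph_adj.mp (f.map_adj_iff.mp hadj) with h | h
  · obtain rfl : b = a + 1 := by linear_combination h
    exact hole_notMem_closedNbhd_sub_one f a
      (mem_closedNbhd_comm.mp (nbr_mem _ (cycleGraph_adj_sub_one a)))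
  · obtain rfl : b = a - 1 := by linear_combination -h
    exact hole_notMem_closedNbhd_sub_one f a (nbr_mem _ (cycleGraph_adj_add_one a))

end Hole

namespace IsRingPartition

variable {G : SimpleGraph V} {k : ℕ} {X : ZMod k → Set V}

lemma neZero (h : IsRingPartition G k X) : NeZero k :=
  ⟨by have := h.1; omega⟩

lemma exists_mem (h : IsRingPartition G k X) (v : V) : ∃ i, v ∈ X i := by
  simpa [← h.2.2.2.1] using mem_univ v

lemma eq_of_mem_of_mem (h : IsRingPartition G k X) {v : V} {i j : ZMod k} (hi : v ∈ X i)
    (hj : v ∈ X j) : i = j := by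
  by_contra hij
  exact Set.disjoint_left.mp (h.2.2.1 hij) hi hj

lemma closedNbhd_subset_or_subset (h : IsRingPartition G k X) {i : ZMod k} {x y : V}
    (hx : x ∈ X i) (hy : y ∈ X i) :
    closedNbhd G x ⊆ closedNbhd G y ∨ closedNbhd G y ⊆ closedNbhd G x := by
  obtain ⟨m, u, -, hrange, hmono, -, -⟩ := h.2.2.2.2 i
  rw [← hrange] at hx hy
  obtain ⟨a, rfl⟩ := hx
  obtain ⟨b, rfl⟩ := hy
  exact (le_total a b).imp (hmono a b) (hmono b a) |>.symm

lemma mem_of_adj (h : IsRingPartition G k X) {i : ZMod k} {x y : V} (hx : x ∈ X i)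
    (hxy : G.Adj x y) :
    y ∈ X (i - 1) ∪ X i ∪ X (i + 1) := by
  obtain ⟨m, u, -, hrange, hmono, -, h0⟩ := h.2.2.2.2 i
  rw [← hrange] at hx
  obtain ⟨a, rfl⟩ := hx
  rw [← h0]
  exact hmono 0 a (Fin.zero_le a) (mem_closedNbhd.mpr (Or.inr hxy))

variable {n : ℕ}

lemma hole_eq_of_mem_of_mem (h : IsRingPartition G k X) (f : cycleGraph (n + 4) ↪g G)
    {i : ZMod k} {a b : Fin (n + 4)} (ha : f a ∈ X i) (hb : f b ∈ X i) : a = b := by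
  by_contra hab
  rcases h.closedNbhd_subset_or_subset ha hb with hsub | hsub
  · exact hole_closedNbhd_not_subset f hab hsub
  · exact hole_closedNbhd_not_subset f (Ne.symm hab) hsub

lemma hole_exists_mem_add_one (h : IsRingPartition G k X) (f : cycleGraph (n + 4) ↪g G)
    {i : ZMod k} {a : Fin (n + 4)} (ha : f a ∈ X i) : ∃ b, f b ∈ X (i + 1) := by
  have notMem {b : Fin (n + 4)} (hb : b ≠ a) : f b ∉ X i :=
    fun hb' => hb (h.hole_eq_of_mem_of_mem f hb' ha)
  rcases h.mem_of_adj ha (f.map_adj_iff.mpr (cycleGraph_adj_add_one a)) with (hp | hp) | hp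
  · rcases h.mem_of_adj ha (f.map_adj_iff.mpr (cycleGraph_adj_sub_one a)) with (hm | hm) | hm
    · exact absurd (h.hole_eq_of_mem_of_mem f hm hp) (Fin.sub_one_ne_add_one a)
    · exact absurd hm (notMem (by simp))
    · exact ⟨_, hm⟩
  · exact absurd hp (notMem (by simp))
  · exact ⟨_, hp⟩

lemma hole_exists_mem (h : IsRingPartition G k X) (f : cycleGraph (n + 4) ↪g G) (i : ZMod k) :
    ∃ a, f a ∈ X i := by
  have := h.neZero
  obtain ⟨i₀, h₀⟩ := h.exists_mem (f 0)
  have reach (j : ℕ) : ∃ a, f a ∈ X (i₀ + j) := by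
    induction j with
    | zero => exact ⟨0, by simpa using h₀⟩
    | succ j ih =>
      obtain ⟨a, ha⟩ := ih
      simpa [add_assoc] using h.hole_exists_mem_add_one f ha
  simpa using reach (i - i₀).val

lemma hole_length_eq (h : IsRingPartition G k X) (f : cycleGraph (n + 4) ↪g G) :
    n + 4 = k := by
  have := h.neZero
  choose part hpart using h.exists_mem
  have hbij : Function.Bijective fun a => part (f a) := by
    refine ⟨fun a b (hab : part (f a) = part (f b)) =>
      h.hole_eq_of_mem_of_mem f (hpart (f a)) (hab ▸ hpart (f b)), fun i => ?_⟩
    obtain ⟨a, ha⟩ := h.hole_exists_mem f i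
    exact ⟨a, h.eq_of_mem_of_mem (hpart (f a)) ha⟩
  simpa using Fintype.card_of_bijective hbij

end IsRingPartition

theorem stmt5 (G : SimpleGraph V) (k : ℕ) (X : ZMod k → Set V)
    (h : IsRingPartition G k X) :
    ∀ (n : ℕ), 4 ≤ n → ∀ _f : cycleGraph n ↪g G,
      (∀ i : ZMod k, ∃! x, x ∈ Set.range ⇑_f ∩ X i) ∧ n = k := by
  intro n hn f
  obtain ⟨n, rfl⟩ := Nat.exists_eq_add_of_le' hn
  refine ⟨fun i => ?_, h.hole_length_eq f⟩
  obtain ⟨a, ha⟩ := h.hole_exists_mem f i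
  refine ⟨f a, ⟨⟨a, rfl⟩, ha⟩, ?_⟩
  rintro _ ⟨⟨b, rfl⟩, hb⟩
  rw [h.hole_eq_of_mem_of_mem f hb ha]
end

section
/- Every ring R satisfies χ(R) ≤ ⌊(3/2)·ω(R)⌋. In particular, every hyperhole H satisfies χ(H) ≤ ⌊(3/2)·ω(H)⌋. -/
open SimpleGraph Set

variable {V : Type*}

def IsHyperholePartition (G : SimpleGraph V) (k : ℕ) (X : ZMod k → Set V) : Prop :=
  4 ≤ k ∧ (∀ i, (X i).Nonempty) ∧ (Pairwise fun i j => Disjoint (X i) (X j)) ∧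
    (⋃ i, X i) = Set.univ ∧ (∀ i, G.IsClique (X i)) ∧
    (∀ i : ZMod k, ∀ x ∈ X i, ∀ y ∈ X (i + 1), G.Adj x y) ∧
    (∀ i j : ZMod k, j ≠ i - 1 → j ≠ i → j ≠ i + 1 → ∀ x ∈ X i, ∀ y ∈ X j, ¬ G.Adj x y)

/-!
Enumerate each class `X i` as `u i 0, u i 1, …` with shrinking closed neighbourhoods. If
`u i a` is adjacent to `u (i + 1) b`, then every `u i a'` with `a' ≤ a` is adjacent to every
`u (i + 1) b'` with `b' ≤ b`, so these `a + b + 2` vertices form a clique and `a + b + 2 ≤ ω`.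
Since the last vertex of `X i` sees the first one of `X (i + 1)`, every position is at most
`ω - 2`. Colour position `a` by `a` on even classes and by `ω - 1 - a` on odd ones: adjacent
vertices of consecutive classes then never clash. Parity fails only around the last class, whose
positions below `ω / 2` are moved to `ω / 2` fresh colours. A hyperhole is a ring for any
enumeration of its cliques.
-/

def cyclicColor (k w i a : ℕ) : ℕ :=
  if i = k - 1 then (if a < w / 2 then w + a else a)
  else if i % 2 = 0 then a else w - 1 - a

lemma cyclicColor_lt {k w i a : ℕ} (ha : a + 2 ≤ w) : cyclicColor k w i a < w + w / 2 := by
  unfold cyclicColor; split_ifs <;> omega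

lemma cyclicColor_ne_of_ne {k w i a b : ℕ} (hab : a ≠ b) (ha : a + 2 ≤ w) (hb : b + 2 ≤ w) :
    cyclicColor k w i a ≠ cyclicColor k w i b := by
  unfold cyclicColor; split_ifs <;> omega

lemma cyclicColor_ne_of_succ {k w i j a b : ℕ} (hk : 1 < k) (hi : i < k)
    (hj : j = i + 1 ∨ i + 1 = k ∧ j = 0) (hab : a + b + 2 ≤ w) :
    cyclicColor k w i a ≠ cyclicColor k w j b := by
  unfold cyclicColor; split_ifs <;> omega

lemma ZMod.val_add_one_eq_or {k : ℕ} [Fact (1 < k)] (i : ZMod k) :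
    (i + 1).val = i.val + 1 ∨ i.val + 1 = k ∧ (i + 1).val = 0 := by
  rw [ZMod.val_add, ZMod.val_one]
  rcases Nat.lt_or_ge (i.val + 1) k with h | h
  · exact Or.inl (Nat.mod_eq_of_lt h)
  · have h : i.val + 1 = k := le_antisymm (ZMod.val_lt i) h
    exact Or.inr ⟨h, by rw [h, Nat.mod_self]⟩

section

variable {G : SimpleGraph V}

theorem colorable_of_cyclic_enumeration {k w : ℕ} (hk : 1 < k) {n : ZMod k → ℕ}
    (u : ∀ i, Fin (n i + 1) → V) (hcover : ∀ v, ∃ i a, u i a = v)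
    (hnear : ∀ i j a b, G.Adj (u i a) (u j b) → j = i ∨ j = i + 1 ∨ i = j + 1)
    (hnext : ∀ i a b, G.Adj (u i a) (u (i + 1) b) → (a : ℕ) + b + 2 ≤ w)
    (hlen : ∀ i, n i + 2 ≤ w) :
    G.Colorable (w + w / 2) := by
  have : Fact (1 < k) := ⟨hk⟩
  have hpos : ∀ i (a : Fin (n i + 1)), (a : ℕ) + 2 ≤ w := fun i a => by
    have := a.is_le; have := hlen i; omega
  have hsucc : ∀ (i j : ZMod k) (a : Fin (n i + 1)) (b : Fin (n j + 1)), j = i + 1 →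
      G.Adj (u i a) (u j b) → cyclicColor k w i.val a ≠ cyclicColor k w j.val b := by
    rintro i _ a b rfl hadj
    exact cyclicColor_ne_of_succ hk (ZMod.val_lt i) (ZMod.val_add_one_eq_or i) (hnext i a b hadj)
  have hproper : ∀ i j a b, G.Adj (u i a) (u j b) →
      cyclicColor k w i.val a ≠ cyclicColor k w j.val b := by
    intro i j a b hadj
    rcases hnear i j a b hadj with rfl | hj | hi
    · exact cyclicColor_ne_of_ne (fun h => hadj.ne (congrArg _ (Fin.ext h))) (hpos _ a) (hpos _ b)
    · exact hsucc i j a b hj hadj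
    · exact (hsucc j i b a hi hadj.symm).symm
  choose cls pos hcls using hcover
  refine ⟨Coloring.mk
    (fun v => ⟨cyclicColor k w (cls v).val (pos v), cyclicColor_lt (hpos _ _)⟩)
    fun {x y} hadj hxy => hproper _ _ _ _ ?_ (congrArg Fin.val hxy)⟩
  rwa [hcls x, hcls y]

lemma mem_closedNbhd_iff {v w : V} : w ∈ closedNbhd G v ↔ w = v ∨ G.Adj v w := Iff.rfl

lemma adj_of_mem_closedNbhd {v w : V} (h : w ∈ closedNbhd G v) (hne : w ≠ v) : G.Adj v w :=
  (mem_closedNbhd_iff.mp h).resolve_left hne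

lemma isClique_of_subset_closedNbhd {S : Set V} (h : ∀ v ∈ S, S ⊆ closedNbhd G v) :
    G.IsClique S :=
  fun _ hv _ hw hne => adj_of_mem_closedNbhd (h _ hv hw) hne.symm

section Antitone

variable {n : ℕ} {u : Fin (n + 1) → V}

lemma isClique_range_of_closedNbhd_antitone
    (hu : ∀ a b, a ≤ b → closedNbhd G (u b) ⊆ closedNbhd G (u a))
    (hlast : range u ⊆ closedNbhd G (u (Fin.last n))) :
    G.IsClique (range u) :=
  isClique_of_subset_closedNbhd fun _ ⟨a, ha⟩ => ha ▸ hlast.trans (hu a _ (Fin.le_last a))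

lemma adj_of_closedNbhd_antitone
    (hu : ∀ a b, a ≤ b → closedNbhd G (u b) ⊆ closedNbhd G (u a))
    {a a' : Fin (n + 1)} {x : V} (hadj : G.Adj (u a) x) (ha : a' ≤ a) (hx : x ∉ range u) :
    G.Adj (u a') x :=
  adj_of_mem_closedNbhd (hu a' a ha (Or.inr hadj)) fun h => hx ⟨a', h.symm⟩

end Antitone

lemma val_add_val_add_two_le_cliqueNum [Finite V] {m n : ℕ} {p : Fin (m + 1) → V}
    {q : Fin (n + 1) → V} (hp : Function.Injective p) (hq : Function.Injective q)
    (hpq : ∀ a b, p a ≠ q b)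
    (hcp : G.IsClique (range p)) (hcq : G.IsClique (range q)) {a : Fin (m + 1)}
    {b : Fin (n + 1)} (hab : ∀ a' ≤ a, ∀ b' ≤ b, G.Adj (p a') (q b')) :
    (a : ℕ) + b + 2 ≤ G.cliqueNum := by
  classical
  have hdisj : Disjoint ((Finset.Iic a).image p) ((Finset.Iic b).image q) := by
    simp only [Finset.disjoint_left, Finset.mem_image]
    rintro _ ⟨a', -, rfl⟩ ⟨b', -, h⟩
    exact hpq a' b' h.symm
  have hclique : G.IsClique ((Finset.Iic a).image p ∪ (Finset.Iic b).image q : Finset V) := by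
    intro x hx y hy hxy
    simp only [Finset.coe_union, Finset.coe_image, mem_union, mem_image, Finset.mem_coe,
      Finset.mem_Iic] at hx hy
    rcases hx with ⟨a1, ha1, rfl⟩ | ⟨b1, hb1, rfl⟩ <;>
      rcases hy with ⟨a2, ha2, rfl⟩ | ⟨b2, hb2, rfl⟩
    · exact hcp (mem_range_self _) (mem_range_self _) hxy
    · exact hab a1 ha1 b2 hb2
    · exact (hab a2 ha2 b1 hb1).symm
    · exact hcq (mem_range_self _) (mem_range_self _) hxy
  have := hclique.card_le_cliqueNum
  rw [Finset.card_union_of_disjoint hdisj, Finset.card_image_of_injective _ hp,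
    Finset.card_image_of_injective _ hq, Fin.card_Iic, Fin.card_Iic] at this
  omega

end

lemma Set.Nonempty.exists_fin_succ_param {S : Set V} (hS : S.Finite) (hne : S.Nonempty) :
    ∃ (n : ℕ) (u : Fin (n + 1) → V), Function.Injective u ∧ range u = S := by
  obtain ⟨m, u, hu, rfl⟩ := hS.fin_param
  obtain ⟨n, rfl⟩ : ∃ n, m = n + 1 :=
    Nat.exists_eq_succ_of_ne_zero fun h => by subst h; simp at hne
  exact ⟨n, u, hu, rfl⟩

section Partition

variable {G : SimpleGraph V} {k : ℕ} {X : ZMod k → Set V}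

theorem IsRingPartition.colorable [Finite V] (hR : IsRingPartition G k X) :
    G.Colorable (G.cliqueNum + G.cliqueNum / 2) := by
  obtain ⟨hk, -, hdisj, hcover, hord⟩ := hR
  choose n u hinj hrange hmono hlast h0 using hord
  have huX : ∀ i a, u i a ∈ X i := fun i a => hrange i ▸ mem_range_self a
  have hclass : ∀ {i j v}, v ∈ X i → v ∈ X j → i = j := fun hi hj =>
    hdisj.eq (not_disjoint_iff.2 ⟨_, hi, hj⟩)
  have hnotin : ∀ {i j} (b : Fin (n j + 1)), i ≠ j → u j b ∉ range (u i) := fun b hij h =>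
    hij (hclass (hrange _ ▸ h) (huX _ b))
  have hsucc : ∀ i : ZMod k, i ≠ i + 1 := fun i h => by
    have : Fact (1 < k) := ⟨by omega⟩
    exact one_ne_zero (left_eq_add.mp h)
  have hclique : ∀ i, G.IsClique (range (u i)) := fun i =>
    isClique_range_of_closedNbhd_antitone (hmono i) ((hrange i).trans_subset (hlast i))
  have hdown : ∀ i a a' b b', G.Adj (u i a) (u (i + 1) b) → a' ≤ a → b' ≤ b →
      G.Adj (u i a') (u (i + 1) b') := fun i a a' b b' hadj ha hb =>
    have hadj' := adj_of_closedNbhd_antitone (hmono i) hadj ha (hnotin b (hsucc i))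
    (adj_of_closedNbhd_antitone (hmono _) hadj'.symm hb (hnotin a' (hsucc i).symm)).symm
  have hnext : ∀ i a b, G.Adj (u i a) (u (i + 1) b) → (a : ℕ) + b + 2 ≤ G.cliqueNum :=
    fun i a b hadj => val_add_val_add_two_le_cliqueNum (hinj i) (hinj (i + 1))
      (fun a' b' h => hsucc i (hclass (huX i a') (h ▸ huX _ b'))) (hclique i) (hclique _)
      fun a' ha b' hb => hdown i a a' b b' hadj ha hb
  refine colorable_of_cyclic_enumeration (by omega) u (fun v => ?_) (fun i j a b hadj => ?_)
    hnext fun i => ?_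
  · obtain ⟨i, hv⟩ := mem_iUnion.mp (hcover ▸ mem_univ v)
    rw [← hrange i] at hv
    exact ⟨i, hv⟩
  · have hb : u j b ∈ closedNbhd G (u i 0) := hmono i 0 a (Fin.zero_le a) (Or.inr hadj)
    rw [h0 i] at hb
    rcases hb with (hb | hb) | hb
    · exact Or.inr (Or.inr (sub_eq_iff_eq_add.mp (hclass hb (huX j b))))
    · exact Or.inl (hclass hb (huX j b)).symm
    · exact Or.inr (Or.inl (hclass hb (huX j b)).symm)
  · have hmem : u i (Fin.last (n i)) ∈ closedNbhd G (u (i + 1) 0) := by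
      rw [h0, add_sub_cancel_right]
      exact Or.inl (Or.inl (huX i _))
    simpa using hnext i _ 0 (adj_of_mem_closedNbhd hmem fun h =>
      hsucc i (hclass (huX i _) (h ▸ huX _ 0))).symm

theorem IsHyperholePartition.closedNbhd_eq (hH : IsHyperholePartition G k X) {i : ZMod k}
    {v : V} (hv : v ∈ X i) : closedNbhd G v = X (i - 1) ∪ X i ∪ X (i + 1) := by
  obtain ⟨-, -, -, hcover, hclique, hcomp, hanti⟩ := hH
  ext y
  simp only [mem_closedNbhd_iff, mem_union]
  constructor
  · rintro (rfl | hadj)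
    · exact Or.inl (Or.inr hv)
    obtain ⟨j, hy⟩ := mem_iUnion.mp (hcover ▸ mem_univ y)
    by_cases h1 : j = i - 1
    · exact Or.inl (Or.inl (h1 ▸ hy))
    by_cases h2 : j = i
    · exact Or.inl (Or.inr (h2 ▸ hy))
    by_cases h3 : j = i + 1
    · exact Or.inr (h3 ▸ hy)
    exact absurd hadj (hanti i j h1 h2 h3 v hv y hy)
  · rintro ((hy | hy) | hy)
    · exact Or.inr (hcomp (i - 1) y hy v (by rwa [sub_add_cancel])).symm
    · by_cases hyv : y = v
      · exact Or.inl hyv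
      · exact Or.inr (hclique i hv hy (Ne.symm hyv))
    · exact Or.inr (hcomp i v hv y hy)

theorem IsHyperholePartition.isRingPartition [Finite V] (hH : IsHyperholePartition G k X) :
    IsRingPartition G k X := by
  refine ⟨hH.1, hH.2.1, hH.2.2.1, hH.2.2.2.1, fun i => ?_⟩
  obtain ⟨n, u, hinj, hrange⟩ := (hH.2.1 i).exists_fin_succ_param (toFinite (X i))
  have hu : ∀ a, closedNbhd G (u a) = X (i - 1) ∪ X i ∪ X (i + 1) :=
    fun a => hH.closedNbhd_eq (hrange ▸ mem_range_self a)
  refine ⟨n, u, hinj, hrange, fun a b _ => (hu b).trans_subset (hu a).symm.subset, ?_, hu 0⟩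
  rw [hu]
  exact subset_union_right.trans subset_union_left

end Partition

theorem stmt11 [Fintype V] (G : SimpleGraph V)
    (h : (∃ (k : ℕ) (X : ZMod k → Set V), IsRingPartition G k X) ∨
         (∃ (k : ℕ) (X : ZMod k → Set V), IsHyperholePartition G k X)) :
    G.chromaticNumber ≤ ((3 * G.cliqueNum / 2 : ℕ) : ℕ∞) := by
  have hcol : G.Colorable (G.cliqueNum + G.cliqueNum / 2) := by
    rcases h with ⟨k, X, hR⟩ | ⟨k, X, hH⟩
    · exact hR.colorable
    · exact hH.isRingPartition.colorable
  rw [show 3 * G.cliqueNum / 2 = G.cliqueNum + G.cliqueNum / 2 by omega]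
  exact hcol.chromaticNumber_le
end

section
/- Every 7-hyperantihole G satisfies χ(G) ≤ ⌊(4/3)·ω(G)⌋. -/
/-!
Write `x i` for the size of `X i`. The index sets `{i, i + 2, i + 4}` contain no two consecutive
indices of the 7-cycle, so `X i ∪ X (i + 2) ∪ X (i + 4)` is a clique and
`x i + x (i + 2) + x (i + 4) ≤ ω`; summing over `i` gives `3 |V| ≤ 7 ω`, so the smallest part
`X r` has at most `ω / 3` vertices. Consecutive parts are anticomplete, so a vertex of `X i` and
one of `X (i + 1)` may share a colour. Pairing vertices greedily along the path
`X (r + 1), …, X (r + 6)` leaves at most `ω` of them unpaired (König's theorem for this path: each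
of its maximal independent sets of parts lies in one of the triples), which is the perfect
colouring of `G - X r` used in the paper made explicit. Hence `χ(G) ≤ ω + x r ≤ ⌊4 ω / 3⌋`.
-/

open SimpleGraph Set

variable {V : Type*}

def IsHyperantiholePartition (G : SimpleGraph V) (k : ℕ) (X : ZMod k → Set V) : Prop :=
  4 ≤ k ∧ (∀ i, (X i).Nonempty) ∧ (Pairwise fun i j => Disjoint (X i) (X j)) ∧
    (⋃ i, X i) = Set.univ ∧ (∀ i, G.IsClique (X i)) ∧
    (∀ i : ZMod k, ∀ x ∈ X i, ∀ y ∈ X (i + 1), ¬ G.Adj x y) ∧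
    (∀ i j : ZMod k, j ≠ i - 1 → j ≠ i → j ≠ i + 1 → ∀ x ∈ X i, ∀ y ∈ X j, G.Adj x y)

open scoped Function

/-- `a i` is the number of disjoint pairs matched between parts `i` and `i + 1` of a cyclic
partition with part sizes `x`. -/
def IsCycleMatching {k : ℕ} (x a : ZMod k → ℕ) : Prop :=
  ∀ i, a i + a (i + 1) ≤ x (i + 1)

theorem sum_comp_add_right {G M : Type*} [AddGroup G] [Fintype G] [AddCommMonoid M] (f : G → M)
    (r : G) : ∑ i, f (i + r) = ∑ i, f i :=
  Equiv.sum_comp (Equiv.addRight r) f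

-- Unlike `fin_cases`, this produces `ZMod 7` numerals, which `reduce_mod_char` normalizes.
theorem ZMod.seven_cases (i : ZMod 7) :
    i = 0 ∨ i = 1 ∨ i = 2 ∨ i = 3 ∨ i = 4 ∨ i = 5 ∨ i = 6 := by
  revert i; decide

theorem exists_isCycleMatching_of_triple_le_zero (x : ZMod 7 → ℕ) {m : ℕ}
    (htri : ∀ i, x i + x (i + 2) + x (i + 4) ≤ m) :
    ∃ a, IsCycleMatching x a ∧ ∑ i, x i ≤ x 0 + m + ∑ i, a i := by
  -- greedy matching along the path `1, …, 6`
  set a₁ := min (x 1) (x 2)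
  set a₂ := min (x 2 - a₁) (x 3)
  set a₃ := min (x 3 - a₂) (x 4)
  set a₄ := min (x 4 - a₃) (x 5)
  set a₅ := min (x 5 - a₄) (x 6)
  let a : ZMod 7 → ℕ := ![0, a₁, a₂, a₃, a₄, a₅, 0]
  refine ⟨a, fun i => ?_, ?_⟩
  · rcases ZMod.seven_cases i with rfl | rfl | rfl | rfl | rfl | rfl | rfl <;> reduce_mod_char <;>
      simp [a] <;> omega
  · -- the maximal independent sets `{1,3,5}, {1,3,6}, {1,4,6}, {2,4,6}, {2,5}` of the path
    have h135 : x 1 + x 3 + x 5 ≤ m := htri 1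
    have h136 : x 6 + x 1 + x 3 ≤ m := htri 6
    have h146 : x 4 + x 6 + x 1 ≤ m := htri 4
    have h246 : x 2 + x 4 + x 6 ≤ m := htri 2
    have h025 : x 5 + x 0 + x 2 ≤ m := htri 5
    have hx : ∑ i, x i = x 0 + x 1 + x 2 + x 3 + x 4 + x 5 + x 6 := Fin.sum_univ_seven x
    have ha : ∑ i, a i = 0 + a₁ + a₂ + a₃ + a₄ + a₅ + 0 := Fin.sum_univ_seven a
    omega

theorem exists_isCycleMatching_of_triple_le_at (x : ZMod 7 → ℕ) {m : ℕ}
    (htri : ∀ i, x i + x (i + 2) + x (i + 4) ≤ m) (r : ZMod 7) :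
    ∃ a, IsCycleMatching x a ∧ ∑ i, x i ≤ x r + m + ∑ i, a i := by
  obtain ⟨b, hb, hsum⟩ := exists_isCycleMatching_of_triple_le_zero (fun i => x (i + r))
    fun i => by simpa only [add_right_comm] using htri (i + r)
  refine ⟨fun i => b (i - r), fun i => by simpa [sub_add_eq_add_sub] using hb (i - r), ?_⟩
  rw [sum_comp_add_right x, zero_add, ← sum_comp_add_right b (-r)] at hsum
  simpa only [sub_eq_add_neg] using hsum

theorem exists_isCycleMatching_of_triple_le (x : ZMod 7 → ℕ) {m : ℕ}
    (htri : ∀ i, x i + x (i + 2) + x (i + 4) ≤ m) :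
    ∃ a, IsCycleMatching x a ∧ ∑ i, x i ≤ 4 * m / 3 + ∑ i, a i := by
  obtain ⟨r, -, hr⟩ := Finset.exists_min_image Finset.univ x Finset.univ_nonempty
  have hmin : 7 * x r ≤ ∑ i, x i := by
    simpa using Finset.card_nsmul_le_sum Finset.univ x (x r) fun i _ => hr i (Finset.mem_univ i)
  have hsum : 3 * ∑ i, x i ≤ 7 * m :=
    calc 3 * ∑ i, x i = ∑ i, (x i + x (i + 2) + x (i + 4)) := by
          rw [Finset.sum_add_distrib, Finset.sum_add_distrib, sum_comp_add_right x,
            sum_comp_add_right x]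
          ring
      _ ≤ ∑ _i : ZMod 7, m := Finset.sum_le_sum fun i _ => htri i
      _ = 7 * m := by simp
  obtain ⟨a, ha, hsum_a⟩ := exists_isCycleMatching_of_triple_le_at x htri r
  exact ⟨a, ha, by omega⟩

theorem Fintype.card_eq_sum_ncard_of_pairwise_disjoint [Fintype V] {ι : Type*} [Fintype ι]
    (X : ι → Set V) (hdisj : Pairwise (Disjoint on X)) (hcover : ⋃ i, X i = univ) :
    Fintype.card V = ∑ i, (X i).ncard := by
  rw [← Nat.card_eq_fintype_card, ← ncard_univ, ← hcover,
    ncard_iUnion_of_finite (fun i => toFinite _) hdisj, finsum_eq_sum_of_fintype]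

namespace SimpleGraph

theorem IsClique.ncard_le_cliqueNum [Finite V] {G : SimpleGraph V} {s : Set V}
    (hs : G.IsClique s) : s.ncard ≤ G.cliqueNum := by
  obtain ⟨t, rfl⟩ := s.toFinite.exists_finset_coe
  rw [ncard_coe_finset]
  exact IsClique.card_le_cliqueNum (tc := hs)

variable [Fintype V] {G : SimpleGraph V}

theorem colorable_card_sub_of_nonadj_pairs {ι : Type*} [Fintype ι] (f g : ι → V)
    (hf : Function.Injective f) (hg : Function.Injective g) (hfg : ∀ i j, f i ≠ g j)
    (hG : ∀ i, ¬ G.Adj (f i) (g i)) : G.Colorable (Fintype.card V - Fintype.card ι) := by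
  classical
  -- the colours are the vertices outside `range f`, and `f i` takes the colour of `g i`
  let c : V → {v // v ∉ range f} := fun v =>
    if hv : v ∈ range f then ⟨g hv.choose, fun ⟨j, hj⟩ => hfg j _ hj⟩ else ⟨v, hv⟩
  have hc : ∀ u v, G.Adj u v → c u ≠ c v := by
    intro u v huv hcuv
    by_cases hu : u ∈ range f <;> by_cases hv : v ∈ range f <;>
      simp only [c, hu, hv, dite_true, dite_false, Subtype.mk.injEq] at hcuv
    · exact huv.ne (by rw [← hu.choose_spec, ← hv.choose_spec, hg hcuv])
    · exact hG _ (by rwa [hu.choose_spec, hcuv])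
    · exact hG _ (by rw [hv.choose_spec, ← hcuv]; exact huv.symm)
    · exact huv.ne hcuv
  have hcard : Fintype.card {v // v ∉ range f} = Fintype.card V - Fintype.card ι := by
    rw [Fintype.card_subtype_compl, ← Set.card_range_of_injective hf]
  exact hcard ▸ (Coloring.mk c fun huv => hc _ _ huv).colorable

theorem colorable_card_sub_sum_of_isCycleMatching {k : ℕ} [NeZero k] (X : ZMod k → Set V)
    (hdisj : Pairwise (Disjoint on X)) (hanti : ∀ i, ∀ u ∈ X i, ∀ v ∈ X (i + 1), ¬ G.Adj u v)
    {a : ZMod k → ℕ} (ha : IsCycleMatching (fun i => (X i).ncard) a) :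
    G.Colorable (Fintype.card V - ∑ i, a i) := by
  have e : ∀ i, X i ≃ Fin (X i).ncard := fun i => Finite.equivFinOfCardEq (Nat.card_coe_set_eq _)
  have hmem : ∀ {i j v}, v ∈ X i → v ∈ X j → i = j := fun hi hj =>
    by_contra fun hij => Set.disjoint_left.mp (hdisj hij) hi hj
  have hidx : ∀ {i} (p q : Fin (X i).ncard), ((e i).symm p : V) = (e i).symm q → p = q :=
    fun p q hpq => (e _).symm.injective (Subtype.ext hpq)
  -- Pair `⟨i, j⟩` joins the vertex of index `a (i - 1) + j` of `X i` to the vertex of index `j`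
  -- of `X (i + 1)`: in `X (i + 1)` the first `a i` indices are paired with `X i` and the next
  -- `a (i + 1)` with `X (i + 2)`.
  let f : (Σ i, Fin (a i)) → V := fun p => (e p.1).symm ⟨a (p.1 - 1) + p.2, by
    have : a (p.1 - 1) + a p.1 ≤ (X p.1).ncard := by simpa using ha (p.1 - 1)
    omega⟩
  let g : (Σ i, Fin (a i)) → V := fun p => (e (p.1 + 1)).symm ⟨p.2, by
    have : a p.1 + a (p.1 + 1) ≤ (X (p.1 + 1)).ncard := ha p.1
    omega⟩
  have hf_mem : ∀ p, f p ∈ X p.1 := fun p => ((e _).symm _).2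
  have hg_mem : ∀ p, g p ∈ X (p.1 + 1) := fun p => ((e _).symm _).2
  have hf : Function.Injective f := by
    rintro ⟨i, j⟩ ⟨i', j'⟩ hfij
    obtain rfl : i = i' := hmem (hf_mem ⟨i, j⟩) (hfij ▸ hf_mem ⟨i', j'⟩)
    have hjj' := congrArg Fin.val (hidx _ _ hfij)
    simp only [add_right_inj, Fin.val_inj] at hjj'
    rw [hjj']
  have hg : Function.Injective g := by
    rintro ⟨i, j⟩ ⟨i', j'⟩ hgij
    obtain rfl : i = i' := add_right_cancel (hmem (hg_mem ⟨i, j⟩) (hgij ▸ hg_mem ⟨i', j'⟩))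
    have hjj' := congrArg Fin.val (hidx _ _ hgij)
    simp only [Fin.val_inj] at hjj'
    rw [hjj']
  have hfg : ∀ p q, f p ≠ g q := by
    rintro ⟨i, j⟩ ⟨i', j'⟩ hfgij
    obtain rfl : i = i' + 1 := hmem (hf_mem ⟨i, j⟩) (hfgij ▸ hg_mem ⟨i', j'⟩)
    have hjj' := congrArg Fin.val (hidx _ _ hfgij)
    simp only [add_sub_cancel_right] at hjj'
    omega
  simpa using colorable_card_sub_of_nonadj_pairs f g hf hg hfg
    fun p => hanti p.1 _ (hf_mem p) _ (hg_mem p)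

end SimpleGraph

namespace IsHyperantiholePartition

variable {G : SimpleGraph V} {k : ℕ} {X : ZMod k → Set V}

theorem isClique_biUnion (h : IsHyperantiholePartition G k X) {S : Finset (ZMod k)}
    (hS : ∀ i ∈ S, i + 1 ∉ S) : G.IsClique (⋃ i ∈ S, X i) := by
  obtain ⟨-, -, -, -, hclq, -, hcomp⟩ := h
  intro u hu v hv huv
  simp only [mem_iUnion] at hu hv
  obtain ⟨i, hi, hu⟩ := hu
  obtain ⟨j, hj, hv⟩ := hv
  by_cases hij : i = j
  · subst hij
    exact hclq i hu hv huv
  · refine hcomp i j ?_ (Ne.symm hij) ?_ u hu v hv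
    · rintro rfl
      exact hS _ hj (by simpa using hi)
    · rintro rfl
      exact hS _ hi hj

theorem sum_ncard_le_cliqueNum [Fintype V] (h : IsHyperantiholePartition G k X)
    {S : Finset (ZMod k)} (hS : ∀ i ∈ S, i + 1 ∉ S) : ∑ i ∈ S, (X i).ncard ≤ G.cliqueNum := by
  have hdisj : (S : Set (ZMod k)).PairwiseDisjoint X := fun i _ j _ hij => h.2.2.1 hij
  calc ∑ i ∈ S, (X i).ncard = (⋃ i ∈ S, X i).ncard := by
        rw [← finsum_mem_coe_finset, ← Finset.set_biUnion_coe,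
          S.finite_toSet.ncard_biUnion (fun i _ => toFinite _) hdisj]
    _ ≤ G.cliqueNum := (h.isClique_biUnion hS).ncard_le_cliqueNum

theorem ncard_add_ncard_add_ncard_le_cliqueNum [Fintype V] {X : ZMod 7 → Set V}
    (h : IsHyperantiholePartition G 7 X) (i : ZMod 7) :
    (X i).ncard + (X (i + 2)).ncard + (X (i + 4)).ncard ≤ G.cliqueNum := by
  have hS : ∀ j ∈ ({i, i + 2, i + 4} : Finset (ZMod 7)),
      j + 1 ∉ ({i, i + 2, i + 4} : Finset (ZMod 7)) := by
    revert i; decide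
  have hi : i ∉ ({i + 2, i + 4} : Finset (ZMod 7)) := by revert i; decide
  have hi2 : i + 2 ≠ i + 4 := by revert i; decide
  simpa [Finset.sum_insert hi, Finset.sum_pair hi2, add_assoc] using h.sum_ncard_le_cliqueNum hS

end IsHyperantiholePartition

theorem stmt12 [Fintype V] (G : SimpleGraph V) (X : ZMod 7 → Set V)
    (h : IsHyperantiholePartition G 7 X) :
    G.chromaticNumber ≤ ((4 * G.cliqueNum / 3 : ℕ) : ℕ∞) := by
  obtain ⟨a, ha, hsum⟩ :=
    exists_isCycleMatching_of_triple_le _ h.ncard_add_ncard_add_ncard_le_cliqueNum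
  obtain ⟨-, -, hdisj, hcover, -, hanti, -⟩ := h
  have hcard := Fintype.card_eq_sum_ncard_of_pairwise_disjoint X hdisj hcover
  calc G.chromaticNumber ≤ (Fintype.card V - ∑ i, a i : ℕ) :=
        (G.colorable_card_sub_sum_of_isCycleMatching X hdisj hanti ha).chromaticNumber_le
    _ ≤ _ := by exact_mod_cast (by omega)
end

section
/- Let (G, w) be a weighted graph and (A, B, C) a clique-cut-partition of G. Define a weight function w_B on B ∪ C by w_B(v) = w(v) for v ∈ B and, for c ∈ C, w_B(c) = α(G[A ∪ {c}], w) − α(G[A], w) (differences of maximum weights of stable sets). Let S_B be a maximum-weight stable set of (G[B ∪ C], w_B) all of whose vertices have strictly positive w_B-weight, let C̃ = S_B ∩ C, and let S_{A∪C̃} be a maximum-weight stable set of (G[A ∪ C̃], w). Then |C̃| ≤ 1 and S_{A∪C̃} ∪ S_B is a maximum-weight stable set of (G, w). -/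
/-!
Write `α` for `maxWeightStable G w`. A stable set meets the clique `C` in at most one vertex, and
for a set `D ⊆ C` with at most one element `α (A ∪ D) = α A + w_B(D)`. Splitting a stable set
`S` of `G` into its parts in `A`, in `C ∖ A` and in the rest (which lies in `B`) therefore gives
`w(S) ≤ α A + w_B(S ∖ A) ≤ α A + α_{w_B}(B ∪ C)`. Conversely, positivity of `w_B` on `C̃` forces
`C̃ ⊆ S_{A∪C̃}`, so `S_{A∪C̃}` and `S_B` overlap exactly in `C̃`; since `A` and `B` are
anticomplete their union is stable, and its weight is `α A + w_B(C̃) + w_B(S_B ∖ C̃)`, which is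
the upper bound.
-/

open SimpleGraph Set

variable {V : Type*}

noncomputable def maxWeightStable (G : SimpleGraph V) (w : V → ℝ) (T : Set V) : ℝ :=
  sSup {x | ∃ S : Finset V, ↑S ⊆ T ∧ IsStableSet G ↑S ∧ x = ∑ v ∈ S, w v}

section StableSets

variable {G : SimpleGraph V}

theorem IsStableSet.subsingleton_inter {S C : Set V} (hS : IsStableSet G S)
    (hC : G.IsClique C) : (S ∩ C).Subsingleton := fun a ha b hb => by
  by_contra hab
  exact hS ha.1 hb.1 hab (hC ha.2 hb.2 hab)

theorem IsStableSet.union_of_cut {A B D S T : Set V} (hS : IsStableSet G S)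
    (hT : IsStableSet G T) (hcut : ∀ a ∈ A, ∀ b ∈ B, ¬ G.Adj a b) (hSA : S ⊆ A ∪ D)
    (hTB : T ⊆ B ∪ D) (hDS : D ⊆ S) (hDT : D ⊆ T) : IsStableSet G (S ∪ T) := by
  have hcross : ∀ a ∈ S, ∀ b ∈ T, a ≠ b → ¬ G.Adj a b := by
    intro a ha b hb hab
    rcases hSA ha with haA | haD
    · rcases hTB hb with hbB | hbD
      · exact hcut a haA b hbB
      · exact hS ha (hDS hbD) hab
    · exact hT (hDT haD) hb hab
  exact Set.pairwise_union.2 ⟨hS, hT, fun a ha b hb hab =>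
    ⟨hcross a ha b hb hab, fun h => hcross a ha b hb hab h.symm⟩⟩

variable {w : V → ℝ}

theorem sum_le_maxWeightStable [Finite V] {T : Set V} {S : Finset V} (hST : ↑S ⊆ T)
    (hS : IsStableSet G ↑S) : ∑ v ∈ S, w v ≤ maxWeightStable G w T := by
  refine le_csSup ?_ ⟨S, hST, hS, rfl⟩
  refine (Set.finite_range fun S : Finset V => ∑ v ∈ S, w v).bddAbove.mono ?_
  rintro _ ⟨S, -, -, rfl⟩
  exact ⟨S, rfl⟩

theorem maxWeightStable_le {T : Set V} {x : ℝ}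
    (h : ∀ S : Finset V, ↑S ⊆ T → IsStableSet G ↑S → ∑ v ∈ S, w v ≤ x) :
    maxWeightStable G w T ≤ x := by
  refine csSup_le ⟨0, ∅, by simp, by simp [IsStableSet], by simp⟩ ?_
  rintro _ ⟨S, hST, hS, rfl⟩
  exact h S hST hS

theorem maxWeightStable_union_eq_add_sum (A : Set V) {D : Finset V}
    (hD : (D : Set V).Subsingleton) :
    maxWeightStable G w (A ∪ D) =
      maxWeightStable G w A + ∑ c ∈ D, (maxWeightStable G w (A ∪ {c}) - maxWeightStable G w A) := by
  rcases D.eq_empty_or_nonempty with rfl | ⟨c, hc⟩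
  · simp
  · obtain rfl : D = {c} := Finset.eq_singleton_iff_unique_mem.2 ⟨hc, fun x hx => hD hx hc⟩
    simp

theorem subset_of_sum_eq_maxWeightStable [Finite V] {A : Set V} {D S : Finset V}
    (hD : (D : Set V).Subsingleton)
    (hlt : ∀ c ∈ D, maxWeightStable G w A < maxWeightStable G w (A ∪ {c}))
    (hSA : ↑S ⊆ A ∪ D) (hS : IsStableSet G ↑S)
    (hmax : ∑ v ∈ S, w v = maxWeightStable G w (A ∪ D)) : D ⊆ S := by
  intro c hc
  by_contra hcS
  have hDc : (D : Set V) = {c} := hD.eq_singleton_of_mem hc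
  have hSA' : ↑S ⊆ A := fun v hv =>
    (hSA hv).resolve_right fun hvD => hcS (by
      rw [hDc, mem_singleton_iff] at hvD
      exact hvD ▸ Finset.mem_coe.1 hv)
  have := sum_le_maxWeightStable (w := w) hSA' hS
  rw [hmax, hDc] at this
  linarith [hlt c hc]

theorem sum_add_sum_le_maxWeightStable_add_sum [Finite V] [DecidableEq V] {A : Set V}
    {S D : Finset V} (hSA : ↑S ⊆ A) (hDA : ∀ v ∈ D, v ∉ A) (hD : (D : Set V).Subsingleton)
    (hSD : IsStableSet G ↑(S ∪ D)) :
    ∑ v ∈ S, w v + ∑ v ∈ D, w v ≤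
      maxWeightStable G w A + ∑ c ∈ D, (maxWeightStable G w (A ∪ {c}) - maxWeightStable G w A) := by
  rw [← Finset.sum_union (Finset.disjoint_right.2 fun v hvD hvS => hDA v hvD (hSA hvS)),
    ← maxWeightStable_union_eq_add_sum A hD]
  exact sum_le_maxWeightStable (Finset.coe_union S D ▸ union_subset_union_left _ hSA) hSD


theorem sum_union_add_sum_eq_of_cut [DecidableEq V] {A B : Set V} (hAB : Disjoint A B)
    {D S T : Finset V} (hSA : ↑S ⊆ A ∪ ↑D) (hTB : ↑T ⊆ B ∪ ↑D) (hDS : D ⊆ S) (hDT : D ⊆ T)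
    {f g : V → ℝ} (hgf : ∀ v ∈ B, g v = f v) :
    ∑ v ∈ S ∪ T, f v + ∑ v ∈ D, g v = ∑ v ∈ S, f v + ∑ v ∈ T, g v := by
  have hinter : S ∩ T = D := by
    refine Finset.Subset.antisymm (fun v hv => ?_) (Finset.subset_inter hDS hDT)
    obtain ⟨hvS, hvT⟩ := Finset.mem_inter.1 hv
    rcases hSA hvS, hTB hvT with ⟨hvA | hvD, hvB | hvD⟩
    all_goals first | exact hvD | exact absurd hvB (hAB.notMem_of_mem_left hvA)
  have hT_diff : ∑ v ∈ T \ D, g v = ∑ v ∈ T \ D, f v :=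
    Finset.sum_congr rfl fun v hv =>
      hgf v ((hTB (Finset.sdiff_subset hv)).resolve_right (Finset.mem_sdiff.1 hv).2)
  have hsum := Finset.sum_union_inter (s₁ := S) (s₂ := T) (f := f)
  rw [hinter] at hsum
  linarith [Finset.sum_sdiff hDT (f := f), Finset.sum_sdiff hDT (f := g)]

theorem maxWeightStable_univ_le_add [Finite V] {wB : V → ℝ}
    {A B C : Set V} (hcover : A ∪ B ∪ C = univ) (hC : G.IsClique C)
    (hwB_B : ∀ v ∈ B, wB v = w v)
    (hwB_C : ∀ c ∈ C, wB c = maxWeightStable G w (A ∪ {c}) - maxWeightStable G w A) :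
    maxWeightStable G w univ ≤ maxWeightStable G w A + maxWeightStable G wB (B ∪ C) := by
  classical
  refine maxWeightStable_le fun S _ hS => ?_
  set T := S.filter (· ∉ A)
  set TC := T.filter (· ∈ C)
  set TB := T.filter (· ∉ C)
  have hTB : ∀ v ∈ TB, v ∈ B := by
    intro v hv
    simp only [TB, T, Finset.mem_filter] at hv
    have : v ∈ A ∪ B ∪ C := hcover ▸ mem_univ v
    rcases this with (h | h) | h <;> tauto
  have hTC : ∀ v ∈ TC, v ∈ C := fun v hv => (Finset.mem_filter.1 hv).2
  have hTC_S : TC ⊆ S := (Finset.filter_subset _ _).trans (Finset.filter_subset _ _)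
  have hA_part : ∑ v ∈ S with v ∈ A, w v + ∑ v ∈ TC, w v ≤
      maxWeightStable G w A + ∑ v ∈ TC, wB v := by
    rw [Finset.sum_congr rfl fun c hc => hwB_C c (hTC c hc)]
    refine sum_add_sum_le_maxWeightStable_add_sum (fun v hv => (Finset.mem_filter.1 hv).2)
      (fun v hv => (Finset.mem_filter.1 (Finset.filter_subset _ _ hv)).2) ?_ (hS.mono ?_)
    · exact (hS.subsingleton_inter hC).anti fun v hv => ⟨hTC_S hv, hTC v hv⟩
    · exact Finset.coe_subset.2 (Finset.union_subset (Finset.filter_subset _ _) hTC_S)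
  have hBC_part : ∑ v ∈ TC, wB v + ∑ v ∈ TB, w v ≤ maxWeightStable G wB (B ∪ C) := by
    rw [← Finset.sum_congr rfl fun v hv => hwB_B v (hTB v hv),
      Finset.sum_filter_add_sum_filter_not]
    refine sum_le_maxWeightStable (fun v hv => ?_) (hS.mono (Finset.filter_subset _ _))
    by_cases hvC : v ∈ C
    · exact Or.inr hvC
    · exact Or.inl (hTB v (Finset.mem_filter.2 ⟨hv, hvC⟩))
  have hsplit : ∑ v ∈ S, w v = ∑ v ∈ S with v ∈ A, w v + (∑ v ∈ TC, w v + ∑ v ∈ TB, w v) := by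
    rw [Finset.sum_filter_add_sum_filter_not, Finset.sum_filter_add_sum_filter_not]
  linarith

end StableSets

theorem stmt16 [Fintype V] [DecidableEq V] (G : SimpleGraph V) (w : V → ℝ)
    (A B C : Set V) (hpart : CliqueCutPartition G A B C)
    (wB : V → ℝ)
    (hwB_B : ∀ v ∈ B, wB v = w v)
    (hwB_C : ∀ c ∈ C, wB c = maxWeightStable G w (A ∪ {c}) - maxWeightStable G w A)
    (SB : Finset V) (hSB_sub : ↑SB ⊆ B ∪ C) (hSB_st : IsStableSet G ↑SB)
    (hSB_max : ∑ v ∈ SB, wB v = maxWeightStable G wB (B ∪ C))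
    (hSB_pos : ∀ v ∈ SB, 0 < wB v)
    (Ct : Finset V) (hCt : ↑Ct = ↑SB ∩ C)
    (SA : Finset V) (hSA_sub : ↑SA ⊆ A ∪ ↑Ct) (hSA_st : IsStableSet G ↑SA)
    (hSA_max : ∑ v ∈ SA, w v = maxWeightStable G w (A ∪ ↑Ct)) :
    Ct.card ≤ 1 ∧ IsStableSet G ↑(SA ∪ SB) ∧
      ∑ v ∈ SA ∪ SB, w v = maxWeightStable G w Set.univ := by
  obtain ⟨⟨-, -, hAB, -, -, hcover, hcut⟩, hC⟩ := hpart
  have hCt_sub : (Ct : Set V).Subsingleton := hCt ▸ hSB_st.subsingleton_inter hC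
  have hCt_SB : Ct ⊆ SB := Finset.coe_subset.1 (hCt ▸ inter_subset_left)
  have hCt_C : ↑Ct ⊆ C := hCt ▸ inter_subset_right
  have hSB_sub_Ct : ↑SB ⊆ B ∪ ↑Ct := fun v hv =>
    (hSB_sub hv).imp_right fun hvC => hCt ▸ ⟨hv, hvC⟩
  have hSA_eq : ∑ v ∈ SA, w v = maxWeightStable G w A + ∑ c ∈ Ct, wB c := by
    rw [hSA_max, maxWeightStable_union_eq_add_sum A hCt_sub]
    exact congrArg _ (Finset.sum_congr rfl fun c hc => (hwB_C c (hCt_C hc)).symm)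
  have hCt_SA : Ct ⊆ SA := by
    refine subset_of_sum_eq_maxWeightStable hCt_sub (fun c hc => ?_) hSA_sub hSA_st hSA_max
    linarith [hSB_pos c (hCt_SB hc), hwB_C c (hCt_C hc)]
  have hstable : IsStableSet G ↑(SA ∪ SB) := by
    rw [Finset.coe_union]
    exact hSA_st.union_of_cut hSB_st hcut hSA_sub hSB_sub_Ct (Finset.coe_subset.2 hCt_SA)
      (Finset.coe_subset.2 hCt_SB)
  have hweight := sum_union_add_sum_eq_of_cut hAB hSA_sub hSB_sub_Ct hCt_SA hCt_SB hwB_B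
  refine ⟨Finset.card_le_one.2 fun a ha b hb => hCt_sub ha hb, hstable, le_antisymm ?_ ?_⟩
  · exact sum_le_maxWeightStable (subset_univ _) hstable
  · calc maxWeightStable G w univ
        ≤ maxWeightStable G w A + maxWeightStable G wB (B ∪ C) :=
          maxWeightStable_univ_le_add hcover hC hwB_B hwB_C
      _ = ∑ v ∈ SA ∪ SB, w v := by linarith
end

section
/- Let G be a graph of girth at least 9 (no cycles of length less than 9). Then the complement of G contains no induced cycle of length at least 5, no induced K_{2,3}, and no induced complement-of-C_6 (i.e., the complement of G is (long hole, K_{2,3}, C̄_6)-free). -/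
/-!
A graph of girth at least 9 has no cycle of length at most 8. An induced copy of `H` in `Gᶜ` is an
induced copy of `Hᶜ` in `G`, and for each forbidden `H` the complement `Hᶜ` has a short cycle:
`C̄₅ ≅ C₅` via `i ↦ 2i`; for `n ≥ 6` the vertices `0, 2, 4` of `Cₙ` span a triangle of `C̄ₙ`; the
side of size three of `K₂,₃` is a triangle of its complement; and the complement of `C̄₆` is `C₆`.
-/

open SimpleGraph Set

variable {V : Type*}

namespace SimpleGraph

variable {W : Type*} {G : SimpleGraph V} {H : SimpleGraph W}

lemma egirth_le_of_cycleGraph_isContained {k : ℕ} (hk : 2 < k) (h : cycleGraph k ⊑ G) :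
    G.egirth ≤ k := by
  obtain ⟨v, p, hp, rfl⟩ := (cycleGraph_isContained_iff hk).mp h
  exact egirth_le_length hp

lemma isEmpty_embedding_compl_of_lt_egirth {k : ℕ} (hk : 2 < k) (hH : cycleGraph k ⊑ Hᶜ)
    (hG : k < G.egirth) : IsEmpty (H ↪g Gᶜ) :=
  ⟨fun f ↦ (egirth_le_of_cycleGraph_isContained hk <|
    hH.trans (compl_compl G ▸ Embedding.complEquiv f).isContained).not_gt hG⟩

lemma not_cycleGraph_adj_of_two_le {n : ℕ} {u v : Fin n} (huv : u + 2 ≤ (v : ℕ))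
    (hvu : (v : ℕ) + 2 ≤ u + n) : ¬(cycleGraph n).Adj u v := by
  have hlt : u < v := Fin.lt_def.mpr (by omega)
  rw [cycleGraph_adj', Fin.coe_sub_iff_lt.mpr hlt, Fin.coe_sub_iff_le.mpr hlt.le]
  omega

lemma cycleGraph_five_isContained_compl : cycleGraph 5 ⊑ (cycleGraph 5)ᶜ :=
  ⟨⟨⟨fun i ↦ 2 * i, by decide⟩, by decide⟩⟩

lemma cycleGraph_three_isContained_compl_cycleGraph {n : ℕ} (hn : 6 ≤ n) :
    cycleGraph 3 ⊑ (cycleGraph n)ᶜ := by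
  refine ⟨⟨⟨fun i ↦ ⟨2 * i, by omega⟩, fun {i j} hij ↦ ?_⟩, fun i j hij ↦ ?_⟩⟩
  · have hne : (i : ℕ) ≠ j := Fin.val_ne_of_ne hij.ne
    refine ⟨by simpa [Fin.ext_iff] using hne, ?_⟩
    rcases hne.lt_or_gt with h | h
    · exact not_cycleGraph_adj_of_two_le (by dsimp only; omega) (by dsimp only; omega)
    · exact fun hadj ↦ not_cycleGraph_adj_of_two_le (by dsimp only; omega) (by dsimp only; omega) hadj.symm
  · exact Fin.ext <| by simpa using congrArg Fin.val hij

lemma completeGraph_isContained_compl_completeBipartiteGraph {α β : Type*} :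
    completeGraph β ⊑ (completeBipartiteGraph α β)ᶜ :=
  ⟨⟨⟨Sum.inr, fun hij ↦ by simpa using hij.ne⟩, Sum.inr_injective⟩⟩

end SimpleGraph

theorem stmt19 (G : SimpleGraph V) (h : 9 ≤ G.egirth) :
    (∀ n : ℕ, 5 ≤ n → IsEmpty (cycleGraph n ↪g Gᶜ)) ∧
      IsEmpty (completeBipartiteGraph (Fin 2) (Fin 3) ↪g Gᶜ) ∧
        IsEmpty ((cycleGraph 6)ᶜ ↪g Gᶜ) := by
  have short_cycle {W : Type} {H : SimpleGraph W} (k : ℕ) (hk : 2 < k ∧ k < 9)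
      (hH : cycleGraph k ⊑ Hᶜ) : IsEmpty (H ↪g Gᶜ) :=
    isEmpty_embedding_compl_of_lt_egirth hk.1 hH <| lt_of_lt_of_le (by exact_mod_cast hk.2) h
  refine ⟨fun n hn ↦ ?_, ?_, ?_⟩
  · obtain rfl | hn := hn.eq_or_lt
    · exact short_cycle 5 (by norm_num) cycleGraph_five_isContained_compl
    · exact short_cycle 3 (by norm_num) (cycleGraph_three_isContained_compl_cycleGraph hn)
  · refine short_cycle 3 (by norm_num) ?_
    rw [cycleGraph_three_eq_top]
    exact completeGraph_isContained_compl_completeBipartiteGraph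
  · refine short_cycle 6 (by norm_num) ?_
    rw [compl_compl]
    exact .refl _
end
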